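/- Let s be a word of length 2n over alphabet [k] and write s = s's'' where s' and s'' each have length n. Then s is a reverse shuffle square if and only if there exists a 123-avoiding permutation π of {1,...,n} such that s''_i = s'_{π(i)} for all i. -/

import Mathlib

/-- A word `s` of length `2n` over alphabet `Fin k` is a reverse shuffle square if it
can be partitioned into two disjoint subsequences of length `n` that are reverses of
each other. -/
def IsRevShuffleSquare {n k : ℕ} (s : Fin (2 * n) → Fin k) : Prop :=
  ∃ I J : Fin n → Fin (2 * n), StrictMono I ∧ StrictMono J ∧
    (∀ r r' : Fin n, I r ≠ J r') ∧
    (∀ x : Fin (2 * n), (∃ r, I r = x) ∨ (∃ r, J r = x)) ∧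
    (∀ r : Fin n, s (I r) = s (J r.rev))

/-- A permutation is 123-avoiding if no three indices carry an increasing pattern. -/
def Avoids123 {n : ℕ} (π : Equiv.Perm (Fin n)) : Prop :=
  ¬ ∃ i₁ i₂ i₃ : Fin n, i₁ < i₂ ∧ i₂ < i₃ ∧ π i₁ < π i₂ ∧ π i₂ < π i₃

/-!
A permutation avoids 123 exactly when its positions split into two classes on each of which it
is decreasing: take the left-to-right minima as one class.

Given a reverse shuffle square with subsequences `I` and `J`, match the letter at `I r` with the
one at `J r.rev`. Since the entries of `I` and of `J` lying in the first half form initial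
segments of complementary lengths, every second-half position is matched with a first-half
position; this defines `π`, which is decreasing on the second-half positions taken by `I` and on
those taken by `J`. Conversely, if `π` is decreasing on `P` and on `Pᶜ`, let `I` run through
`π(Pᶜ)` and then `n + P`, and `J` through `π(P)` and then `n + Pᶜ`.
-/

open Finset Function Equiv

namespace Fin

variable {α : Type*} {m n : ℕ}

theorem strictMono_append [Preorder α] {u : Fin m → α} {v : Fin n → α} (hu : StrictMono u)
    (hv : StrictMono v) (huv : ∀ i j, u i < v j) : StrictMono (append u v) := by
  intro x y hxy
  induction x using Fin.addCases with
  | left i =>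
    induction y using Fin.addCases with
    | left j => simpa using hu ((strictMono_castAdd n).lt_iff_lt.mp hxy)
    | right j => simpa using huv i j
  | right i =>
    induction y using Fin.addCases with
    | left j => exact absurd hxy (by simp [Fin.lt_def]; omega)
    | right j => simpa using hv (by simpa using hxy)

theorem range_append (u : Fin m → α) (v : Fin n → α) :
    Set.range (append u v) = Set.range u ∪ Set.range v := by
  have hsurj : Surjective (Sum.elim (castAdd n) (natAdd m)) := by
    convert (finSumFinEquiv (m := m) (n := n)).surjective
    ext z; cases z <;> simp
  rw [← hsurj.range_comp, append_comp_sumElim, Set.Sum.elim_range]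

end Fin

theorem Function.Bijective.card_filter_sumElim {α β γ : Type*} [Fintype α] [Fintype β]
    [Fintype γ] {f : α → γ} {g : β → γ} (h : Bijective (Sum.elim f g)) (p : γ → Prop)
    [DecidablePred p] : #{x | p x} = #{a | p (f a)} + #{b | p (g b)} := by
  simp only [card_filter]
  rw [← h.sum_comp, Fintype.sum_sum_type]
  rfl

theorem Monotone.lt_iff_lt_card_filter {α : Type*} [Preorder α] [DecidableLT α] {m : ℕ}
    {f : Fin m → α} (hf : Monotone f) (c : α) (r : Fin m) :
    f r < c ↔ (r : ℕ) < #{i | f i < c} :=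
  (Fin.lt_card_filter_univ_iff_apply_of_imp _ fun _ _ hji hi ↦ (hf hji).trans_lt hi).symm

section Halves

variable {n : ℕ}

def firstHalf (i : Fin n) : Fin (2 * n) := ⟨i, by omega⟩

def secondHalf (i : Fin n) : Fin (2 * n) := ⟨n + i, by omega⟩

@[simp] theorem val_firstHalf (i : Fin n) : (firstHalf i : ℕ) = i := rfl

@[simp] theorem val_secondHalf (i : Fin n) : (secondHalf i : ℕ) = n + i := rfl

theorem strictMono_firstHalf : StrictMono (firstHalf (n := n)) := fun _ _ h ↦ h

theorem strictMono_secondHalf : StrictMono (secondHalf (n := n)) :=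
  fun _ _ h ↦ Nat.add_lt_add_left h n

theorem firstHalf_lt_secondHalf (i j : Fin n) : firstHalf i < secondHalf j := by
  simp [Fin.lt_def]; omega

@[simp] theorem firstHalf_inj {i j : Fin n} : firstHalf i = firstHalf j ↔ i = j :=
  strictMono_firstHalf.injective.eq_iff

@[simp] theorem secondHalf_inj {i j : Fin n} : secondHalf i = secondHalf j ↔ i = j :=
  strictMono_secondHalf.injective.eq_iff

@[simp] theorem firstHalf_ne_secondHalf (i j : Fin n) : firstHalf i ≠ secondHalf j :=
  (firstHalf_lt_secondHalf i j).ne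

@[simp] theorem secondHalf_ne_firstHalf (i j : Fin n) : secondHalf i ≠ firstHalf j :=
  (firstHalf_lt_secondHalf j i).ne'

theorem firstHalf_or_secondHalf (x : Fin (2 * n)) :
    (∃ i, firstHalf i = x) ∨ ∃ i, secondHalf i = x := by
  by_cases hx : (x : ℕ) < n
  · exact .inl ⟨⟨x, hx⟩, rfl⟩
  · exact .inr ⟨⟨x - n, by omega⟩, Fin.ext (by simp; omega)⟩

end Halves

theorem avoids123_iff_exists_strictAntiOn {n : ℕ} {π : Perm (Fin n)} :
    Avoids123 π ↔ ∃ P : Finset (Fin n), StrictAntiOn π P ∧ StrictAntiOn π ↑Pᶜ := by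
  constructor
  · intro hπ
    -- the left-to-right minima of `π`; a non-minimum `i < j` with `π i < π j` completes a 123
    refine ⟨({i | ∀ m < i, π i < π m} : Finset (Fin n)), fun i _ j hj hij ↦ ?_,
      fun i hi j hj hij ↦ ?_⟩
    · simp only [coe_filter, mem_univ, true_and] at hj
      exact hj i hij
    · simp only [compl_filter, not_forall, not_lt, coe_filter, mem_univ, true_and] at hi
      obtain ⟨m, hmi, hm⟩ := hi
      by_contra! hij'
      exact hπ ⟨m, i, j, hmi, hij, hm.lt_of_ne (π.injective.ne hmi.ne),
        hij'.lt_of_ne (π.injective.ne hij.ne)⟩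
  · rintro ⟨P, hP, hPc⟩ ⟨i₁, i₂, i₃, h₁₂, h₂₃, hπ₁₂, hπ₂₃⟩
    have mem_iff_not_mem : ∀ {i j}, i < j → π i < π j → (i ∈ P ↔ j ∉ P) := by
      intro i j hij hπij
      constructor
      · exact fun hi hj ↦ (hP hi hj hij).asymm hπij
      · intro hj
        by_contra hi
        exact (hPc (by simpa using hi) (by simpa using hj) hij).asymm hπij
    have := mem_iff_not_mem h₁₂ hπ₁₂
    have := mem_iff_not_mem h₂₃ hπ₂₃
    have := mem_iff_not_mem (h₁₂.trans h₂₃) (hπ₁₂.trans hπ₂₃)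
    tauto

section HalvesSeq

variable {n : ℕ} (π : Perm (Fin n)) (Q R : Finset (Fin n))

/-- The first-half positions `π(R)`, increasing when `π` is decreasing on `R`, followed by the
second-half positions `n + Q`. -/
def halvesSeq : Fin (#R + #Q) → Fin (2 * n) :=
  Fin.append (firstHalf ∘ π ∘ R.orderEmbOfFin rfl ∘ Fin.rev)
    (secondHalf ∘ Q.orderEmbOfFin rfl)

variable {π Q R}

theorem strictMono_halvesSeq (hR : StrictAntiOn π R) : StrictMono (halvesSeq π Q R) :=
  Fin.strictMono_append
    (strictMono_firstHalf.comp fun _ _ hij ↦ hR (orderEmbOfFin_mem _ _ _)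
      (orderEmbOfFin_mem _ _ _) ((orderEmbOfFin _ _).strictMono (Fin.rev_lt_rev.mpr hij)))
    (strictMono_secondHalf.comp (orderEmbOfFin _ _).strictMono)
    fun _ _ ↦ firstHalf_lt_secondHalf _ _

theorem firstHalf_mem_range_halvesSeq (y : Fin n) :
    firstHalf y ∈ Set.range (halvesSeq π Q R) ↔ π.symm y ∈ R := by
  rw [halvesSeq, Fin.range_append]
  simp [Set.range_comp]

theorem secondHalf_mem_range_halvesSeq (y : Fin n) :
    secondHalf y ∈ Set.range (halvesSeq π Q R) ↔ y ∈ Q := by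
  rw [halvesSeq, Fin.range_append]
  simp [Set.range_comp]

theorem comp_halvesSeq_rev {α : Type*} {s : Fin (2 * n) → α}
    (hs : ∀ i, s (secondHalf i) = s (firstHalf (π i))) (i : Fin (#Q + #R)) :
    s (halvesSeq π R Q i.rev) = s (halvesSeq π Q R (i.cast (Nat.add_comm ..))) := by
  rw [halvesSeq, halvesSeq, Fin.append_rev]
  generalize i.cast _ = m
  induction m using Fin.addCases <;> simp [hs]

end HalvesSeq

theorem isRevShuffleSquare_of_strictAntiOn {n k : ℕ} {s : Fin (2 * n) → Fin k}
    {π : Perm (Fin n)} {P : Finset (Fin n)} (hP : StrictAntiOn π P)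
    (hPc : StrictAntiOn π ↑Pᶜ)
    (hs : ∀ i, s (secondHalf i) = s (firstHalf (π i))) :
    IsRevShuffleSquare s := by
  have hI : n = #Pᶜ + #P := ((card_compl_add_card P).trans (Fintype.card_fin n)).symm
  have hJ : n = #P + #Pᶜ := hI.trans (Nat.add_comm ..)
  have range_cast : ∀ {m} (h : n = m) (f : Fin m → Fin (2 * n)),
      Set.range (f ∘ Fin.cast h) = Set.range f := fun h f ↦ (finCongr h).surjective.range_comp f
  have mem_range_iff :
      ∀ x, x ∈ Set.range (halvesSeq π P Pᶜ) ↔ x ∉ Set.range (halvesSeq π Pᶜ P) := by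
    intro x
    rcases firstHalf_or_secondHalf x with ⟨y, rfl⟩ | ⟨y, rfl⟩ <;>
      simp only [firstHalf_mem_range_halvesSeq, secondHalf_mem_range_halvesSeq, mem_compl, not_not]
  refine ⟨halvesSeq π P Pᶜ ∘ Fin.cast hI, halvesSeq π Pᶜ P ∘ Fin.cast hJ,
    (strictMono_halvesSeq hPc).comp (Fin.cast_strictMono _),
    (strictMono_halvesSeq hP).comp (Fin.cast_strictMono _), fun r r' h ↦ ?_, fun x ↦ ?_,
    fun r ↦ ?_⟩
  · have hr : _ ∈ Set.range (halvesSeq π P Pᶜ ∘ Fin.cast hI) := ⟨r, h⟩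
    rw [range_cast, mem_range_iff, ← range_cast hJ] at hr
    exact hr ⟨r', rfl⟩
  · simp only [← Set.mem_range, range_cast, mem_range_iff]
    tauto
  · rw [comp_apply, comp_apply, Fin.cast_rev, comp_halvesSeq_rev hs, Fin.cast_cast]

section Partner

variable {n : ℕ} {I J : Fin n → Fin (2 * n)}

/-- The position matched with `Sum.elim I J z` when `I r` is paired with `J r.rev`. -/
def partner (I J : Fin n → Fin (2 * n)) : Fin n ⊕ Fin n → Fin (2 * n)
  | .inl r => J r.rev
  | .inr r => I r.rev

theorem le_val_iff_val_rev_lt (hI : StrictMono I) (hJ : StrictMono J)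
    (hbij : Bijective (Sum.elim I J)) (r : Fin n) : n ≤ (I r : ℕ) ↔ (J r.rev : ℕ) < n := by
  -- the first-half entries of `I` and of `J` are initial segments whose lengths add up to `n`
  have hcount : #{r | (I r : ℕ) < n} + #{r | (J r : ℕ) < n} = n := by
    rw [← hbij.card_filter_sumElim fun x : Fin (2 * n) ↦ (x : ℕ) < n, Fin.card_filter_val_lt]
    omega
  have hmono {K : Fin n → Fin (2 * n)} (hK : StrictMono K) : Monotone fun r ↦ (K r : ℕ) :=
    fun _ _ h ↦ hK.monotone h
  rw [(hmono hJ).lt_iff_lt_card_filter, ← not_lt, (hmono hI).lt_iff_lt_card_filter, Fin.val_rev]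
  omega

theorem partner_injective (hI : Injective I) (hJ : Injective J) (hdisj : ∀ r r', I r ≠ J r') :
    Injective (partner I J) := by
  rintro (r | r) (r' | r') h <;> simp_all [partner, hI.eq_iff, hJ.eq_iff, (hdisj _ _).symm]

theorem val_partner_lt (hI : StrictMono I) (hJ : StrictMono J) (hbij : Bijective (Sum.elim I J))
    {z : Fin n ⊕ Fin n} (hz : n ≤ ((Sum.elim I J z : Fin (2 * n)) : ℕ)) :
    (partner I J z : ℕ) < n := by
  cases z with
  | inl r => exact (le_val_iff_val_rev_lt hI hJ hbij r).mp hz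
  | inr r =>
    have := le_val_iff_val_rev_lt hI hJ hbij r.rev
    rw [Fin.rev_rev] at this
    exact not_le.mp fun h ↦ (this.mp h).not_ge hz

theorem partner_lt_partner (hI : StrictMono I) (hJ : StrictMono J) {z z' : Fin n ⊕ Fin n}
    (hside : z.isLeft = z'.isLeft) (hzz' : Sum.elim I J z < Sum.elim I J z') :
    partner I J z' < partner I J z := by
  rcases z with r | r <;> rcases z' with r' | r'
  · exact hJ (Fin.rev_lt_rev.mpr (hI.lt_iff_lt.mp hzz'))
  · simp at hside
  · simp at hside
  · exact hI (Fin.rev_lt_rev.mpr (hJ.lt_iff_lt.mp hzz'))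

theorem comp_partner {k : ℕ} {s : Fin (2 * n) → Fin k} (hrev : ∀ r, s (I r) = s (J r.rev))
    (z : Fin n ⊕ Fin n) : s (partner I J z) = s (Sum.elim I J z) := by
  cases z with
  | inl r => exact (hrev r).symm
  | inr r => simpa [partner] using hrev r.rev

end Partner

theorem IsRevShuffleSquare.exists_strictAntiOn {n k : ℕ} {s : Fin (2 * n) → Fin k}
    (h : IsRevShuffleSquare s) :
    ∃ (π : Perm (Fin n)) (P : Finset (Fin n)), StrictAntiOn π P ∧ StrictAntiOn π ↑Pᶜ ∧
      ∀ i, s (secondHalf i) = s (firstHalf (π i)) := by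
  obtain ⟨I, J, hI, hJ, hdisj, hcov, hrev⟩ := h
  have hbij : Bijective (Sum.elim I J) := by
    refine ⟨hI.injective.sumElim hJ.injective hdisj, fun x ↦ ?_⟩
    rcases hcov x with ⟨r, rfl⟩ | ⟨r, rfl⟩
    exacts [⟨.inl r, rfl⟩, ⟨.inr r, rfl⟩]
  let z (i : Fin n) : Fin n ⊕ Fin n := (Equiv.ofBijective _ hbij).symm (secondHalf i)
  have hz (i : Fin n) : Sum.elim I J (z i) = secondHalf i :=
    (Equiv.ofBijective _ hbij).apply_symm_apply _
  let π (i : Fin n) : Fin n :=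
    ⟨partner I J (z i), val_partner_lt hI hJ hbij (by rw [hz]; simp)⟩
  have hπ (i : Fin n) : firstHalf (π i) = partner I J (z i) := rfl
  have π_injective : Injective π := fun i j hij ↦ by
    have := congrArg firstHalf hij
    rw [hπ, hπ] at this
    simpa [z] using partner_injective hI.injective hJ.injective hdisj this
  have π_anti (i j : Fin n) (hside : (z i).isLeft = (z j).isLeft) (hij : i < j) : π j < π i := by
    rw [← strictMono_firstHalf.lt_iff_lt, hπ, hπ]
    exact partner_lt_partner hI hJ hside (by rw [hz, hz]; exact strictMono_secondHalf hij)
  refine ⟨Equiv.ofBijective π π_injective.bijective_of_finite,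
    ({i | (z i).isLeft} : Finset (Fin n)), fun i hi j hj ↦ π_anti i j ?_,
    fun i hi j hj ↦ π_anti i j ?_, fun i ↦ ?_⟩
  · simp only [coe_filter, mem_univ, true_and, Set.mem_ofPred_eq] at hi hj
    rw [hi, hj]
  · simp only [compl_filter, Bool.not_eq_true, coe_filter, mem_univ, true_and,
      Set.mem_ofPred_eq] at hi hj
    rw [hi, hj]
  · rw [Equiv.ofBijective_apply, hπ, comp_partner hrev, hz]

theorem revShuffleSquare_iff_avoids123 (n k : ℕ) (s : Fin (2 * n) → Fin k) :
    IsRevShuffleSquare s ↔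
      ∃ π : Equiv.Perm (Fin n), Avoids123 π ∧
        ∀ i : Fin n,
          s ⟨n + (i : ℕ), by have := i.isLt; omega⟩
            = s ⟨((π i : Fin n) : ℕ), by have := (π i).isLt; omega⟩ := by
  constructor
  · intro h
    obtain ⟨π, P, hP, hPc, hs⟩ := h.exists_strictAntiOn
    exact ⟨π, avoids123_iff_exists_strictAntiOn.mpr ⟨P, hP, hPc⟩, hs⟩
  · rintro ⟨π, hπ, hs⟩
    obtain ⟨P, hP, hPc⟩ := avoids123_iff_exists_strictAntiOn.mp hπ
    exact isRevShuffleSquare_of_strictAntiOn hP hPc hs
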